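/- arXiv:1306.0108 — 3 statements merged into one kernel-verified Lean document; each statement's English description precedes it below -/
import Mathlib

section
/- Let I be a nilpotent ideal of a ring R. Then R is strongly P-clean if and only if R/I is strongly P-clean. -/
/-- An element `a` of a ring is strongly nilpotent if every sequence
`a = a₀, a₁, a₂, …` with `a_{i+1} ∈ a_i R a_i` is eventually zero. -/
def IsStronglyNilpotent {R : Type*} [Ring R] (a : R) : Prop :=
  ∀ f : ℕ → R, f 0 = a → (∀ i, ∃ r : R, f (i + 1) = f i * r * f i) → ∃ n, f n = 0

/-- The prime radical `P(R)`: the set of strongly nilpotent elements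
(equivalently, the intersection of all prime ideals). -/
def primeRadical (R : Type*) [Ring R] : Set R :=
  {a | IsStronglyNilpotent a}

/-- An element is strongly P-clean if it is the sum of an idempotent and an
element of the prime radical that commute. -/
def IsStronglyPClean {R : Type*} [Ring R] (x : R) : Prop :=
  ∃ e w : R, IsIdempotentElem e ∧ w ∈ primeRadical R ∧ x = e + w ∧ e * w = w * e

/-- A ring is strongly P-clean if each of its elements is strongly P-clean. -/
def StronglyPCleanRing (R : Type*) [Ring R] : Prop :=
  ∀ x : R, IsStronglyPClean x
/-- A two-sided ideal `I` is nilpotent if `Iⁿ = 0` for some positive `n`;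
equivalently, every product of `n` elements of `I` vanishes. -/
def TwoSidedIdeal.IsNilpotentIdeal {R : Type*} [Ring R] (I : TwoSidedIdeal R) : Prop :=
  ∃ n : ℕ, 0 < n ∧ ∀ f : Fin n → R, (∀ i, f i ∈ I) → (List.ofFn f).prod = 0

/-! `x` is strongly P-clean iff `x - x ^ 2` is strongly nilpotent: given `(x - x ^ 2) ^ n = 0`,
the polynomial `1 - (1 - x ^ n) ^ n` in `x` is an idempotent commuting with `x` and congruent to
it modulo `x - x ^ 2`. Strong nilpotency passes to quotients and lifts along surjections whose
kernel consists of strongly nilpotent elements, and every element of a nilpotent ideal is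
strongly nilpotent. -/

/-- The idempotent `1 - (1 - a ^ n) ^ n` of `isIdempotentElem_one_sub_one_sub_pow_pow` is
congruent to `a` modulo `a - a ^ 2`: it vanishes modulo `a` and equals `1` modulo `1 - a`. -/
lemma sub_sq_dvd_one_sub_one_sub_pow_pow_sub {A : Type*} [CommRing A] (a : A) {n : ℕ}
    (hn : n ≠ 0) : a - a ^ 2 ∣ 1 - (1 - a ^ n) ^ n - a := by
  have hdvd_a : a ∣ 1 - (1 - a ^ n) ^ n - a := by
    have h := sub_dvd_pow_sub_pow (1 : A) (1 - a ^ n) n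
    rw [sub_sub_cancel, one_pow] at h
    exact dvd_sub ((dvd_pow_self a hn).trans h) dvd_rfl
  have hdvd_one_sub : 1 - a ∣ 1 - (1 - a ^ n) ^ n - a := by
    have h := sub_dvd_pow_sub_pow (1 : A) a n
    rw [one_pow] at h
    rw [sub_right_comm]
    exact dvd_sub dvd_rfl (dvd_pow h hn)
  have hcop : IsCoprime a (1 - a) := ⟨1, 1, by ring⟩
  simpa [sq, mul_sub] using hcop.mul_dvd hdvd_a hdvd_one_sub

section

variable {R S : Type*} [Ring R] [Ring S]

namespace IsStronglyNilpotent

lemma mul_right {t : R} (ht : IsStronglyNilpotent t) (c : R) : IsStronglyNilpotent (t * c) := by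
  intro f hf0 hstep
  choose r hr using hstep
  let g : ℕ → R := fun n => Nat.rec t (fun i gi => gi * (c * r i) * gi) n
  have hfg : ∀ i, f i = g i * c := by
    intro i
    induction i with
    | zero => exact hf0
    | succ i ih =>
      rw [hr i, ih]
      show _ = g i * (c * r i) * g i * c
      noncomm_ring
  obtain ⟨n, hn⟩ := ht g rfl fun i => ⟨c * r i, rfl⟩
  exact ⟨n, by rw [hfg n, hn, zero_mul]⟩

lemma isNilpotent {a : R} (ha : IsStronglyNilpotent a) : IsNilpotent a := by
  obtain ⟨n, hn⟩ := ha (fun i => a ^ 2 ^ i) (pow_one a)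
    fun i => ⟨1, by rw [mul_one, ← pow_add, ← two_mul, pow_succ', pow_mul]⟩
  exact ⟨2 ^ n, hn⟩

lemma map {φ : R →+* S} (hφ : Function.Surjective φ) {a : R} (ha : IsStronglyNilpotent a) :
    IsStronglyNilpotent (φ a) := by
  intro f hf0 hstep
  choose r hr using hstep
  choose r' hr' using fun i => hφ (r i)
  let g : ℕ → R := fun n => Nat.rec a (fun i gi => gi * r' i * gi) n
  have hfg : ∀ i, φ (g i) = f i := by
    intro i
    induction i with
    | zero => exact hf0.symm
    | succ i ih =>
      show φ (g i * r' i * g i) = _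
      rw [map_mul, map_mul, ih, hr', hr]
  obtain ⟨n, hn⟩ := ha g rfl fun i => ⟨r' i, rfl⟩
  exact ⟨n, by rw [← hfg n, hn, map_zero]⟩

/-- Any admissible sequence for `a` maps to one for `φ a`, so it eventually enters the kernel;
from there on it is an admissible sequence for an element of the kernel. -/
lemma of_map {φ : R →+* S} (hker : ∀ b, φ b = 0 → IsStronglyNilpotent b) {a : R}
    (ha : IsStronglyNilpotent (φ a)) : IsStronglyNilpotent a := by
  intro f hf0 hstep
  choose r hr using hstep
  obtain ⟨N, hN⟩ := ha (φ ∘ f) (by simp [hf0])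
    fun i => ⟨φ (r i), by simp only [Function.comp, hr, map_mul]⟩
  obtain ⟨k, hk⟩ := hker (f N) hN (fun k => f (N + k)) rfl fun k => ⟨r (N + k), hr (N + k)⟩
  exact ⟨N + k, hk⟩

end IsStronglyNilpotent

lemma TwoSidedIdeal.IsNilpotentIdeal.isStronglyNilpotent {I : TwoSidedIdeal R}
    (hI : I.IsNilpotentIdeal) {a : R} (ha : a ∈ I) : IsStronglyNilpotent a := by
  obtain ⟨n, hn, hprod⟩ := hI
  obtain ⟨m, rfl⟩ := Nat.exists_eq_succ_of_ne_zero hn.ne'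
  intro f hf0 hstep
  choose r hr using hstep
  have hfI : ∀ k, f k ∈ I := by
    intro k
    induction k with
    | zero => exact hf0 ▸ ha
    | succ k ih => exact hr k ▸ I.mul_mem_left _ _ ih
  have hf : ∀ k, ∃ g : Fin (k + 1) → R, (∀ i, g i ∈ I) ∧ f k = (List.ofFn g).prod := by
    intro k
    induction k with
    | zero => exact ⟨fun _ => a, fun _ => ha, by simp [hf0]⟩
    | succ k ih =>
      obtain ⟨g, hgI, hgf⟩ := ih
      refine ⟨Fin.snoc g (r k * f k), fun i => ?_, ?_⟩
      · induction i using Fin.lastCases with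
        | last => simpa using I.mul_mem_left _ _ (hfI k)
        | cast i => simpa using hgI i
      · rw [List.ofFn_succ', List.prod_concat, hr, mul_assoc, hgf]
        simp
  obtain ⟨g, hgI, hgf⟩ := hf m
  exact ⟨m, hgf ▸ hprod g hgI⟩

open Polynomial in
theorem isStronglyPClean_iff_isStronglyNilpotent_sub_sq (x : R) :
    IsStronglyPClean x ↔ IsStronglyNilpotent (x - x ^ 2) := by
  constructor
  · rintro ⟨e, w, he, hw, rfl, hcomm⟩
    have h : e + w - (e + w) ^ 2 = w * (1 - e - e - w) := by
      simp only [sq, add_mul, mul_add, mul_sub, mul_one, he.eq, hcomm]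
      abel
    exact h ▸ hw.mul_right _
  · intro h
    obtain ⟨n, hn⟩ := h.isNilpotent
    have hn' : (x - x ^ 2) ^ (n + 1) = 0 := by rw [pow_succ, hn, zero_mul]
    set e := 1 - (1 - x ^ (n + 1)) ^ (n + 1) with he_def
    obtain ⟨c, hc⟩ : x - x ^ 2 ∣ e - x := by
      simpa using
        map_dvd (aeval x) (sub_sq_dvd_one_sub_one_sub_pow_pow_sub (X : ℤ[X]) n.succ_ne_zero)
    have hcomm : Commute e x := by
      rw [he_def]
      exact (Commute.one_left x).sub_left
        (((Commute.one_left x).sub_left ((Commute.refl x).pow_left _)).pow_left _)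
    refine ⟨e, x - e, isIdempotentElem_one_sub_one_sub_pow_pow x _ hn', ?_, by abel,
      (hcomm.sub_right (Commute.refl e)).eq⟩
    have hw : x - e = (x - x ^ 2) * -c := by rw [mul_neg, ← hc, neg_sub]
    exact hw ▸ h.mul_right _

lemma IsStronglyPClean.map {φ : R →+* S} (hφ : Function.Surjective φ) {x : R}
    (hx : IsStronglyPClean x) : IsStronglyPClean (φ x) := by
  obtain ⟨e, w, he, hw, rfl, hcomm⟩ := hx
  exact ⟨φ e, φ w, he.map φ, hw.map hφ, map_add φ e w, by rw [← map_mul, hcomm, map_mul]⟩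

theorem stronglyPCleanRing_iff_of_surjective {φ : R →+* S} (hφ : Function.Surjective φ)
    (hker : ∀ a, φ a = 0 → IsStronglyNilpotent a) :
    StronglyPCleanRing R ↔ StronglyPCleanRing S := by
  refine ⟨fun hR y => ?_, fun hS x => ?_⟩
  · obtain ⟨x, rfl⟩ := hφ y
    exact (hR x).map hφ
  · rw [isStronglyPClean_iff_isStronglyNilpotent_sub_sq]
    refine IsStronglyNilpotent.of_map hker ?_
    rw [map_sub, map_pow, ← isStronglyPClean_iff_isStronglyNilpotent_sub_sq]
    exact hS (φ x)

end

/-- **Lemma 2.7.** Let `I` be a nilpotent (two-sided) ideal of a ring `R`. Then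
`R` is strongly P-clean iff `R/I` is strongly P-clean. -/
theorem stronglyPCleanRing_iff_quotient_nilpotent_ideal
    (R : Type*) [Ring R] (I : TwoSidedIdeal R) (hI : I.IsNilpotentIdeal) :
    StronglyPCleanRing R ↔ StronglyPCleanRing I.ringCon.Quotient :=
  stronglyPCleanRing_iff_of_surjective I.ringCon.mk'_surjective fun a ha =>
    hI.isStronglyNilpotent <| (I.mem_iff a).mpr <| (RingCon.eq I.ringCon).mp ha
end

section
/- Every finite subdirect product of strongly P-clean rings is strongly P-clean. That is, if R is a subring of the direct product R₁ ⊕ ⋯ ⊕ Rₙ such that each projection R → Rᵢ is surjective, and each Rᵢ is strongly P-clean, then R is strongly P-clean. -/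
/-!
An element `x` is strongly P-clean exactly when `x * x - x` is strongly nilpotent: one direction
is the computation `(e + w) * (e + w) - (e + w) = w * (2 * e + w - 1)`, the other lifts an
idempotent modulo the nilpotent element `x * x - x` as a polynomial in `x`. Strong nilpotence is
detected coordinatewise in a finite product and reflected by injective ring maps, so strongly
P-clean rings are closed under finite products and subrings.
-/

open Polynomial in
/-- The iteration `p ↦ 3 * p ^ 2 - 2 * p ^ 3` keeps `p ≡ X` modulo `X * X - X`, and turns
`u = p * p - p` into `u ^ 2 * (4 * u - 3)`. -/
theorem Polynomial.exists_dvd_sub_X_and_pow_succ_dvd_mul_self_sub (m : ℕ) :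
    ∃ p : ℤ[X], X * X - X ∣ p - X ∧ (X * X - X) ^ (m + 1) ∣ p * p - p := by
  induction m with
  | zero => exact ⟨X, by simp, by simp⟩
  | succ m ih =>
    obtain ⟨p, ⟨c, hc⟩, ⟨q, hq⟩⟩ := ih
    refine ⟨3 * p ^ 2 - 2 * p ^ 3, ⟨c - (X * X - X) ^ m * q * (2 * p - 1), ?_⟩,
      ⟨(X * X - X) ^ m * q ^ 2 * (4 * (X * X - X) ^ (m + 1) * q - 3), ?_⟩⟩
    · linear_combination hc - (2 * p - 1) * hq
    · linear_combination (4 * ((p * p - p) ^ 2 + (p * p - p) * ((X * X - X) ^ (m + 1) * q)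
        + ((X * X - X) ^ (m + 1) * q) ^ 2) - 3 * ((p * p - p) + (X * X - X) ^ (m + 1) * q)) * hq

theorem exists_isIdempotentElem_commute_sub_eq_mul {R : Type*} [Ring R] {x : R}
    (hx : IsNilpotent (x * x - x)) :
    ∃ e c : R, IsIdempotentElem e ∧ Commute e x ∧ x - e = (x * x - x) * c := by
  obtain ⟨m, hm⟩ := hx
  obtain ⟨p, ⟨c, hc⟩, ⟨q, hq⟩⟩ :=
    Polynomial.exists_dvd_sub_X_and_pow_succ_dvd_mul_self_sub m
  refine ⟨Polynomial.aeval x p, -Polynomial.aeval x c, ?_, ?_, ?_⟩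
  · have := congrArg (Polynomial.aeval x) hq
    simp only [map_sub, map_mul, map_pow, Polynomial.aeval_X, pow_succ, hm, zero_mul] at this
    exact sub_eq_zero.mp this
  · simpa using (Commute.all p Polynomial.X).map (Polynomial.aeval x)
  · have := congrArg (Polynomial.aeval x) hc
    simp only [map_sub, map_mul, Polynomial.aeval_X] at this
    rw [mul_neg, ← this, neg_sub]

section StronglyNilpotent

variable {R : Type*} [Ring R]

theorem IsStronglyNilpotent.mul_right_s5 {a : R} (ha : IsStronglyNilpotent a) (r : R) :
    IsStronglyNilpotent (a * r) := by
  intro f hf0 hstep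
  choose s hs using hstep
  let g : ℕ → R := fun i => Nat.rec a (fun i gi => gi * (r * s i) * gi) i
  have hfg : ∀ i, f i = g i * r := by
    intro i
    induction i with
    | zero => exact hf0
    | succ i ih =>
      rw [hs i, ih]
      show _ = g i * (r * s i) * g i * r
      noncomm_ring
  obtain ⟨m, hm⟩ := ha g rfl fun i => ⟨r * s i, rfl⟩
  exact ⟨m, by rw [hfg, hm, zero_mul]⟩

theorem IsStronglyNilpotent.isNilpotent_s5 {a : R} (ha : IsStronglyNilpotent a) :
    IsNilpotent a := by
  obtain ⟨m, hm⟩ := ha (fun i => a ^ 2 ^ i) (by simp)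
    fun i => ⟨1, by rw [mul_one, ← pow_add, ← two_mul, ← pow_succ']⟩
  exact ⟨_, hm⟩

theorem IsStronglyNilpotent.of_map_injective {S F : Type*} [Ring S] [FunLike F R S]
    [RingHomClass F R S] {f : F} (hf : Function.Injective f) {a : R}
    (ha : IsStronglyNilpotent (f a)) : IsStronglyNilpotent a := by
  intro g hg0 hstep
  choose r hr using hstep
  obtain ⟨m, hm⟩ := ha (fun i => f (g i)) (by rw [hg0])
    fun i => ⟨f (r i), by rw [hr i, map_mul, map_mul]⟩
  exact ⟨m, hf (by rw [hm, map_zero])⟩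

theorem eq_zero_of_le_of_forall_exists_eq_mul_mul {f : ℕ → R}
    (hstep : ∀ i, ∃ r, f (i + 1) = f i * r * f i) {k m : ℕ} (hk : f k = 0) (hkm : k ≤ m) :
    f m = 0 := by
  induction m, hkm using Nat.le_induction with
  | base => exact hk
  | succ m _ ih =>
    obtain ⟨r, hr⟩ := hstep m
    rw [hr, ih, zero_mul, zero_mul]

end StronglyNilpotent

theorem Pi.isStronglyNilpotent {ι : Type*} [Finite ι] {R : ι → Type*} [∀ i, Ring (R i)]
    {a : ∀ i, R i} (ha : ∀ i, IsStronglyNilpotent (a i)) : IsStronglyNilpotent a := by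
  intro f hf0 hstep
  have hstep_apply (i : ι) (k : ℕ) : ∃ r, f (k + 1) i = f k i * r * f k i :=
    let ⟨r, hr⟩ := hstep k
    ⟨r i, congrFun hr i⟩
  choose N hN using fun i => ha i (fun k => f k i) (congrFun hf0 i) (hstep_apply i)
  obtain ⟨M, hM⟩ := (Set.finite_range N).bddAbove
  exact ⟨M, funext fun i => eq_zero_of_le_of_forall_exists_eq_mul_mul (f := (f · i))
    (hstep_apply i) (hN i) (hM ⟨i, rfl⟩)⟩

theorem isStronglyPClean_iff_isStronglyNilpotent_mul_self_sub {R : Type*} [Ring R] {x : R} :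
    IsStronglyPClean x ↔ IsStronglyNilpotent (x * x - x) := by
  constructor
  · rintro ⟨e, w, he, hw, rfl, hew⟩
    have : (e + w) * (e + w) - (e + w) = w * (2 * e + w - 1) :=
      calc (e + w) * (e + w) - (e + w)
          = e * e + (e * w + (w * e + w * w)) - (e + w) := by noncomm_ring
        _ = e + (w * e + (w * e + w * w)) - (e + w) := by rw [he.eq, hew]
        _ = w * (2 * e + w - 1) := by noncomm_ring
    rw [this]
    exact IsStronglyNilpotent.mul_right_s5 hw _
  · intro hx
    obtain ⟨e, c, he, hex, hxe⟩ := exists_isIdempotentElem_commute_sub_eq_mul hx.isNilpotent_s5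
    refine ⟨e, x - e, he, hxe ▸ hx.mul_right_s5 c, (add_sub_cancel e x).symm, ?_⟩
    rw [mul_sub, sub_mul, hex.eq]

theorem StronglyPCleanRing.pi {ι : Type*} [Finite ι] {R : ι → Type*} [∀ i, Ring (R i)]
    (h : ∀ i, StronglyPCleanRing (R i)) : StronglyPCleanRing (∀ i, R i) := fun x =>
  isStronglyPClean_iff_isStronglyNilpotent_mul_self_sub.mpr <| Pi.isStronglyNilpotent fun i =>
    isStronglyPClean_iff_isStronglyNilpotent_mul_self_sub.mp (h i (x i))

theorem StronglyPCleanRing.of_injective {R S F : Type*} [Ring R] [Ring S] [FunLike F R S]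
    [RingHomClass F R S] {f : F} (hf : Function.Injective f) (hS : StronglyPCleanRing S) :
    StronglyPCleanRing R := fun x =>
  isStronglyPClean_iff_isStronglyNilpotent_mul_self_sub.mpr <| .of_map_injective hf <| by
    rw [map_sub, map_mul]
    exact isStronglyPClean_iff_isStronglyNilpotent_mul_self_sub.mp (hS (f x))

theorem stronglyPCleanRing_of_finite_subdirect_product_general
    (n : ℕ) (R : Fin n → Type*) [∀ i, Ring (R i)]
    (S : Subring (∀ i, R i))
    (hP : ∀ i, StronglyPCleanRing (R i)) :
    StronglyPCleanRing S :=
  (StronglyPCleanRing.pi hP).of_injective S.subtype_injective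

/-- **Lemma 2.9.** Every finite subdirect product of strongly P-clean rings is
strongly P-clean: if `S` is a subring of a finite direct product
`R₁ ⊕ ⋯ ⊕ Rₙ` such that every coordinate projection restricted to `S` is
surjective, and each `Rᵢ` is strongly P-clean, then `S` is strongly P-clean. -/
theorem stronglyPCleanRing_of_finite_subdirect_product
    (n : ℕ) (R : Fin n → Type*) [∀ i, Ring (R i)]
    (S : Subring (∀ i, R i))
    (hsurj : ∀ i : Fin n, Function.Surjective fun s : S => (s : ∀ i, R i) i)
    (hP : ∀ i, StronglyPCleanRing (R i)) :
    StronglyPCleanRing S :=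
  stronglyPCleanRing_of_finite_subdirect_product_general n R S hP
end

section
/- A ring R is uniquely P-clean if and only if (1) R is abelian (every idempotent of R is central), and (2) R is strongly P-clean. -/
/-- A ring is uniquely P-clean if every element `x` admits a unique idempotent
`e` with `x - e ∈ P(R)`. -/
def UniquelyPCleanRing (R : Type*) [Ring R] : Prop :=
  ∀ x : R, ∃! e : R, IsIdempotentElem e ∧ x - e ∈ primeRadical R

/-- A ring is abelian if every idempotent is central. -/
def IsAbelianRing (R : Type*) [Ring R] : Prop :=
  ∀ e : R, IsIdempotentElem e → ∀ r : R, e * r = r * e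

/-!
The sequences `a₀, a₁, …` with `aᵢ₊₁ ∈ aᵢ R aᵢ` play the role of multiplicative sets: by Zorn
there is a two-sided ideal maximal among those avoiding a nowhere-vanishing such sequence, and it
is prime, because if `x R y ⊆ I` with `x, y ∉ I` then the colon ideals `{z | z R y ⊆ I}` and
`{w | aₘ R w ⊆ I}` are strictly larger and eventually force some `aₙ R aₙ ⊆ I`. Hence `P(R)` is the
intersection of the prime ideals, so it is a two-sided ideal, and it contains no nonzero idempotent
(take the constant sequence).

If `R` is uniquely P-clean, then `x² - x ∈ P(R)` for every `x`. For an idempotent `e`, the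
square-zero elements `z = e r (1 - e)` and `z = (1 - e) r e` thus lie in `P(R)`, and `e + z` is an
idempotent congruent to `e` modulo `P(R)`; uniqueness gives `z = 0`, i.e. `e` is central.
Conversely, for commuting idempotents `e, f` with `e - f ∈ P(R)`, the idempotent
`e (1 - f) = e (e - f)` lies in `P(R)`, so `e = e f`, and symmetrically `f = f e`.
-/

namespace TwoSidedIdeal
variable {R : Type*} [Ring R]

/-- Unlike `Ideal.IsPrime`, which asks `x * y ∈ I → x ∈ I ∨ y ∈ I`, this is the noncommutative
notion of primeness. -/
structure IsPrime (I : TwoSidedIdeal R) : Prop where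
  ne_top : I ≠ ⊤
  mem_or_mem : ∀ {x y : R}, (∀ r, x * r * y ∈ I) → x ∈ I ∨ y ∈ I

theorem IsPrime.mem_of_isStronglyNilpotent {I : TwoSidedIdeal R} (hI : I.IsPrime) {a : R}
    (ha : IsStronglyNilpotent a) : a ∈ I := by
  by_contra haI
  have step (y : {y : R // y ∉ I}) : ∃ r, y.1 * r * y.1 ∉ I := by
    by_contra! h
    exact y.2 ((hI.mem_or_mem h).elim id id)
  choose r hr using step
  let g (n : ℕ) : {y : R // y ∉ I} := (fun y ↦ ⟨_, hr y⟩)^[n] ⟨a, haI⟩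
  obtain ⟨n, hn⟩ := ha (fun n ↦ (g n).1) rfl fun i ↦
    ⟨r (g i), by simp only [g, Function.iterate_succ_apply']⟩
  exact (g n).2 (hn ▸ I.zero_mem)

def leftColon (I : TwoSidedIdeal R) (a : R) : TwoSidedIdeal R :=
  mk' {z | ∀ r, z * r * a ∈ I} (by simp [I.zero_mem])
    (fun hx hy r ↦ by simpa [add_mul] using I.add_mem (hx r) (hy r))
    (fun hx r ↦ by simpa using I.neg_mem (hx r))
    (fun {x _} hy r ↦ by simpa [mul_assoc] using I.mul_mem_left x _ (hy r))
    (fun {_ y} hx r ↦ by simpa [mul_assoc] using hx (y * r))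

def rightColon (I : TwoSidedIdeal R) (a : R) : TwoSidedIdeal R :=
  mk' {w | ∀ r, a * r * w ∈ I} (by simp [I.zero_mem])
    (fun hx hy r ↦ by simpa [mul_add] using I.add_mem (hx r) (hy r))
    (fun hx r ↦ by simpa using I.neg_mem (hx r))
    (fun {x _} hy r ↦ by simpa [mul_assoc] using hy (r * x))
    (fun {_ y} hx r ↦ by simpa [mul_assoc] using I.mul_mem_right _ y (hx r))

@[simp]
theorem mem_leftColon {I : TwoSidedIdeal R} {a z : R} : z ∈ I.leftColon a ↔ ∀ r, z * r * a ∈ I :=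
  mem_mk' ..

@[simp]
theorem mem_rightColon {I : TwoSidedIdeal R} {a w : R} :
    w ∈ I.rightColon a ↔ ∀ r, a * r * w ∈ I :=
  mem_mk' ..

theorem le_leftColon (I : TwoSidedIdeal R) (a : R) : I ≤ I.leftColon a :=
  fun z hz ↦ mem_leftColon.2 fun r ↦ I.mul_mem_right _ a (I.mul_mem_right z r hz)

theorem le_rightColon (I : TwoSidedIdeal R) (a : R) : I ≤ I.rightColon a :=
  fun w hw ↦ mem_rightColon.2 fun _ ↦ I.mul_mem_left _ w hw

theorem apply_mem_of_le {f : ℕ → R} (hf : ∀ i, ∃ r, f (i + 1) = f i * r * f i)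
    (I : TwoSidedIdeal R) {m n : ℕ} (hmn : m ≤ n) (hm : f m ∈ I) : f n ∈ I := by
  induction n, hmn using Nat.le_induction with
  | base => exact hm
  | succ n _ ih =>
    obtain ⟨r, hr⟩ := hf n
    exact hr ▸ I.mul_mem_right _ _ (I.mul_mem_right _ _ ih)

theorem exists_coe_eq_iUnion_of_isChain {c : Set (TwoSidedIdeal R)} (hc : IsChain (· ≤ ·) c)
    (hne : c.Nonempty) : ∃ J : TwoSidedIdeal R, (J : Set R) = ⋃ I ∈ c, (I : Set R) := by
  refine ⟨mk' (⋃ I ∈ c, (I : Set R)) ?_ ?_ ?_ ?_ ?_, coe_mk' ..⟩ <;>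
    simp only [Set.mem_iUnion, SetLike.mem_coe, exists_prop]
  · exact ⟨hne.some, hne.some_mem, zero_mem _⟩
  · rintro x y ⟨I, hI, hx⟩ ⟨J, hJ, hy⟩
    rcases hc.total hI hJ with hIJ | hJI
    · exact ⟨J, hJ, J.add_mem (hIJ hx) hy⟩
    · exact ⟨I, hI, I.add_mem hx (hJI hy)⟩
  · rintro x ⟨I, hI, hx⟩
    exact ⟨I, hI, I.neg_mem hx⟩
  · rintro x y ⟨I, hI, hy⟩
    exact ⟨I, hI, I.mul_mem_left x y hy⟩
  · rintro x y ⟨I, hI, hx⟩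
    exact ⟨I, hI, I.mul_mem_right x y hx⟩

theorem exists_isPrime_forall_notMem {f : ℕ → R} (hf : ∀ i, ∃ r, f (i + 1) = f i * r * f i)
    (hne : ∀ n, f n ≠ 0) : ∃ I : TwoSidedIdeal R, I.IsPrime ∧ ∀ n, f n ∉ I := by
  obtain ⟨I, -, hmax⟩ := zorn_le_nonempty₀ {I : TwoSidedIdeal R | ∀ n, f n ∉ I}
    (fun c hcS hc J hJ ↦ by
      obtain ⟨U, hU⟩ := exists_coe_eq_iUnion_of_isChain hc ⟨J, hJ⟩
      refine ⟨U, fun n hn ↦ ?_, fun I hI x hx ↦ ?_⟩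
      · rw [← SetLike.mem_coe, hU, Set.mem_iUnion₂] at hn
        obtain ⟨I, hI, hfn⟩ := hn
        exact hcS hI n hfn
      · rw [← SetLike.mem_coe, hU, Set.mem_iUnion₂]
        exact ⟨I, hI, hx⟩)
    ⊥ (fun n hn ↦ hne n ((mem_bot R).1 hn))
  have escape (J : TwoSidedIdeal R) (hIJ : I ≤ J) {x : R} (hx : x ∉ I) (hxJ : x ∈ J) :
      ∃ n, f n ∈ J := by
    by_contra! h
    exact hx (hmax.2 h hIJ hxJ)
  refine ⟨I, ⟨fun h ↦ hmax.1 0 (h ▸ mem_top R), fun {x y} hxy ↦ ?_⟩, hmax.1⟩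
  by_contra! ⟨hx, hy⟩
  obtain ⟨m, hm⟩ := escape _ (I.le_leftColon y) hx (mem_leftColon.2 hxy)
  obtain ⟨k, hk⟩ := escape _ (I.le_rightColon (f m)) hy (mem_rightColon.2 (mem_leftColon.1 hm))
  have h₁ : f (m + k) ∈ I.rightColon (f m) := apply_mem_of_le hf _ (by omega) hk
  have h₂ : f (m + k) ∈ I.leftColon (f (m + k)) :=
    apply_mem_of_le hf _ (by omega) (mem_leftColon.2 (mem_rightColon.1 h₁))
  obtain ⟨r, hr⟩ := hf (m + k)
  exact hmax.1 (m + k + 1) (hr ▸ mem_leftColon.1 h₂ r)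

end TwoSidedIdeal

section

variable {R : Type*} [Ring R]

theorem isStronglyNilpotent_iff_forall_isPrime {a : R} :
    IsStronglyNilpotent a ↔ ∀ I : TwoSidedIdeal R, I.IsPrime → a ∈ I := by
  refine ⟨fun ha I hI ↦ hI.mem_of_isStronglyNilpotent ha, fun h f hf0 hf ↦ ?_⟩
  by_contra! hne
  obtain ⟨I, hI, hfI⟩ := TwoSidedIdeal.exists_isPrime_forall_notMem hf hne
  exact hfI 0 (hf0 ▸ h I hI)

variable (R) in
def primeRadicalIdeal : TwoSidedIdeal R := sInf {I | I.IsPrime}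

theorem mem_primeRadicalIdeal {x : R} : x ∈ primeRadicalIdeal R ↔ x ∈ primeRadical R := by
  rw [primeRadicalIdeal, TwoSidedIdeal.mem_sInf]
  exact isStronglyNilpotent_iff_forall_isPrime.symm

theorem IsIdempotentElem.eq_zero_of_isStronglyNilpotent {e : R} (he : IsIdempotentElem e)
    (h : IsStronglyNilpotent e) : e = 0 :=
  h (fun _ ↦ e) rfl (fun _ ↦ ⟨1, by rw [mul_one, he.eq]⟩) |>.choose_spec

theorem IsIdempotentElem.eq_mul_of_commute_of_sub_mem {e f : R} (he : IsIdempotentElem e)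
    (hf : IsIdempotentElem f) (hef : Commute e f) (h : e - f ∈ primeRadicalIdeal R) :
    e = e * f := by
  have hidem : IsIdempotentElem (e * (1 - f)) :=
    he.mul_of_commute ((Commute.one_right e).sub_right hef) hf.one_sub
  have hmem : e * (1 - f) ∈ primeRadicalIdeal R := by
    rw [show e * (1 - f) = e * (e - f) by rw [mul_sub, mul_sub, he.eq, mul_one]]
    exact (primeRadicalIdeal R).mul_mem_left e _ h
  have := hidem.eq_zero_of_isStronglyNilpotent (mem_primeRadicalIdeal.1 hmem)
  rwa [mul_sub, mul_one, sub_eq_zero] at this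

theorem IsIdempotentElem.eq_of_commute_of_sub_mem {e f : R} (he : IsIdempotentElem e)
    (hf : IsIdempotentElem f) (hef : Commute e f) (h : e - f ∈ primeRadicalIdeal R) : e = f :=
  calc e = e * f := he.eq_mul_of_commute_of_sub_mem hf hef h
    _ = f * e := hef
    _ = f := (hf.eq_mul_of_commute_of_sub_mem he hef.symm
      (neg_sub e f ▸ (primeRadicalIdeal R).neg_mem h)).symm

theorem IsIdempotentElem.add_of_mul_self_eq_zero {e z : R} (he : IsIdempotentElem e)
    (hz : z * z = 0) (hez : e * z + z * e = z) : IsIdempotentElem (e + z) := by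
  rw [IsIdempotentElem, add_mul, mul_add, mul_add, he.eq, hz, add_zero, add_assoc, hez]

namespace UniquelyPCleanRing

theorem eq_of_sub_mem (h : UniquelyPCleanRing R) {e f : R} (he : IsIdempotentElem e)
    (hf : IsIdempotentElem f) (hef : e - f ∈ primeRadical R) : e = f :=
  (h e).unique ⟨he, sub_self e ▸ mem_primeRadicalIdeal.1 (zero_mem _)⟩ ⟨hf, hef⟩

theorem mul_self_sub_mem (h : UniquelyPCleanRing R) (x : R) :
    x * x - x ∈ primeRadicalIdeal R := by
  obtain ⟨e, ⟨he, hw⟩, -⟩ := h x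
  obtain ⟨w, rfl⟩ : ∃ w, x = e + w := ⟨x - e, (add_sub_cancel e x).symm⟩
  rw [add_sub_cancel_left, ← mem_primeRadicalIdeal] at hw
  rw [show (e + w) * (e + w) - (e + w) = e * w + w * e + w * w - w by
    rw [add_mul, mul_add, mul_add, he.eq]; abel]
  set P := primeRadicalIdeal R
  exact P.sub_mem (P.add_mem (P.add_mem (P.mul_mem_left e w hw) (P.mul_mem_right w e hw))
    (P.mul_mem_left w w hw)) hw

theorem eq_zero_of_mul_self_eq_zero (h : UniquelyPCleanRing R) {e z : R}
    (he : IsIdempotentElem e) (hz : z * z = 0) (hez : e * z + z * e = z) : z = 0 := by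
  have hzP : z ∈ primeRadical R := by
    have := (primeRadicalIdeal R).neg_mem (h.mul_self_sub_mem z)
    rwa [hz, zero_sub, neg_neg, mem_primeRadicalIdeal] at this
  have := h.eq_of_sub_mem (he.add_of_mul_self_eq_zero hz hez) he (by rwa [add_sub_cancel_left])
  simpa using this

theorem isAbelianRing (h : UniquelyPCleanRing R) : IsAbelianRing R := by
  intro e he r
  have h₁ : e * r * (1 - e) = 0 := h.eq_zero_of_mul_self_eq_zero he
    (by simp [mul_assoc, sub_mul, mul_sub, he.mul_self_mul])
    (by simp [mul_assoc, sub_mul, mul_sub, he.mul_self_mul, he.eq])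
  have h₂ : (1 - e) * r * e = 0 := h.eq_zero_of_mul_self_eq_zero he
    (by simp [mul_assoc, sub_mul, mul_sub, he.mul_self_mul])
    (by simp [mul_assoc, sub_mul, mul_sub, he.mul_self_mul, he.eq])
  rw [mul_sub, mul_one, sub_eq_zero] at h₁
  rw [sub_mul, sub_mul, one_mul, sub_eq_zero] at h₂
  exact h₁.trans h₂.symm

end UniquelyPCleanRing

end

/-- **Theorem 2.10.** A ring `R` is uniquely P-clean iff `R` is abelian and
strongly P-clean. -/
theorem uniquelyPCleanRing_iff_abelian_and_stronglyPClean (R : Type*) [Ring R] :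
    UniquelyPCleanRing R ↔ IsAbelianRing R ∧ StronglyPCleanRing R := by
  refine ⟨fun h ↦ ⟨h.isAbelianRing, fun x ↦ ?_⟩, fun ⟨hab, hclean⟩ x ↦ ?_⟩
  · obtain ⟨e, ⟨he, hw⟩, -⟩ := h x
    exact ⟨e, x - e, he, hw, (add_sub_cancel e x).symm, h.isAbelianRing e he _⟩
  · obtain ⟨e, w, he, hw, rfl, -⟩ := hclean x
    refine ⟨e, ⟨he, by rwa [add_sub_cancel_left]⟩, fun f ⟨hf, hwf⟩ ↦ ?_⟩
    refine hf.eq_of_commute_of_sub_mem he (hab f hf e) ?_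
    convert (primeRadicalIdeal R).sub_mem (mem_primeRadicalIdeal.2 hw)
      (mem_primeRadicalIdeal.2 hwf) using 1
    abel
end
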